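/- arXiv:1102.0523 — 3 statements merged into one kernel-verified Lean document; each statement's English description precedes it below -/
import Mathlib

section
/- Let f : X → Y be a soft map of compact Hausdorff spaces, Z = f⁻¹(T) for a closed T ⊆ Y, and r : Y → T a continuous retraction. Then there exists a continuous retraction s : X → Z such that f ∘ s = r ∘ f. -/
/-- A continuous map `f : X → Y` is *soft* if for every compact Hausdorff space `B`, closed
subset `A ⊆ B`, and continuous maps `g : A → X`, `h : B → Y` with `f ∘ g = h|A`, there exists
a continuous `k : B → X` extending `g` with `f ∘ k = h`. -/
def IsSoft {X Y : Type} [TopologicalSpace X] [TopologicalSpace Y] (f : C(X, Y)) : Prop :=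
  ∀ (B : Type) [TopologicalSpace B] [CompactSpace B] [T2Space B] (A : Set B), IsClosed A →
    ∀ (g : C(A, X)) (h : C(B, Y)), (∀ a : A, f (g a) = h a) →
      ∃ k : C(B, X), (∀ a : A, k a = g a) ∧ ∀ b, f (k b) = h b

/-- Softness applied to the pair `(X, A)` itself, with the inclusion `A → X` as partial lift. -/
theorem IsSoft.exists_lift_fixing {X Y : Type} [TopologicalSpace X] [CompactSpace X] [T2Space X]
    [TopologicalSpace Y] {f : C(X, Y)} (hf : IsSoft f) {A : Set X} (hA : IsClosed A)
    (h : C(X, Y)) (hfh : ∀ a ∈ A, f a = h a) :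
    ∃ k : C(X, X), (∀ a ∈ A, k a = a) ∧ ∀ x, f (k x) = h x := by
  obtain ⟨k, hk_fix, hk_lift⟩ :=
    hf X A hA (ContinuousMap.restrict A (ContinuousMap.id X)) h fun a => hfh a a.2
  exact ⟨k, fun a ha => hk_fix ⟨a, ha⟩, hk_lift⟩

theorem isSoft_exists_compatible_retraction_general {X Y : Type}
    [TopologicalSpace X] [CompactSpace X] [T2Space X]
    [TopologicalSpace Y]
    (f : C(X, Y)) (hf : IsSoft f) (T : Set Y) (hT : IsClosed T)
    (r : C(Y, ↥T)) (hr : ∀ t : ↥T, r (t : Y) = t) :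
    ∃ s : C(X, ↥(⇑f ⁻¹' T)), (∀ z : ↥(⇑f ⁻¹' T), s (z : X) = z) ∧
      ∀ x, f ((s x : X)) = ((r (f x)) : Y) := by
  obtain ⟨k, hk_fix, hk_lift⟩ := hf.exists_lift_fixing (hT.preimage f.continuous)
    ⟨fun x => r (f x), by fun_prop⟩ fun x hx => congrArg Subtype.val (hr ⟨f x, hx⟩).symm
  have hk_mem : ∀ x, k x ∈ f ⁻¹' T := fun x => by
    simpa only [Set.mem_preimage, hk_lift, ContinuousMap.coe_mk] using (r (f x)).2
  exact ⟨⟨fun x => ⟨k x, hk_mem x⟩, k.continuous.subtype_mk hk_mem⟩,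
    fun z => Subtype.ext (hk_fix z z.2), hk_lift⟩

/-- If `f : X → Y` is soft, `Z = f⁻¹(T)` for a closed `T ⊆ Y`, and `r : Y → T` is a continuous
retraction, then there is a continuous retraction `s : X → Z` with `f ∘ s = r ∘ f`. -/
theorem isSoft_exists_compatible_retraction {X Y : Type}
    [TopologicalSpace X] [CompactSpace X] [T2Space X]
    [TopologicalSpace Y] [CompactSpace Y] [T2Space Y]
    (f : C(X, Y)) (hf : IsSoft f) (T : Set Y) (hT : IsClosed T)
    (r : C(Y, ↥T)) (hr : ∀ t : ↥T, r (t : Y) = t) :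
    ∃ s : C(X, ↥(⇑f ⁻¹' T)), (∀ z : ↥(⇑f ⁻¹' T), s (z : X) = z) ∧
      ∀ x, f ((s x : X)) = ((r (f x)) : Y) :=
  isSoft_exists_compatible_retraction_general f hf T hT r hr
end

section
/- If f : X → Y is a map of compact Hausdorff spaces such that C(f) : C(Y) → C(X) is doubly projective in the category of commutative unital C*-algebras, then f is a soft map. -/
/-- Doubly projective unital `*`-homomorphism in the category of *commutative* unital
C*-algebras. -/
def DoublyProjectiveComm {X Y : Type} [CommCStarAlgebra X] [CommCStarAlgebra Y]
    (i : X →⋆ₐ[ℂ] Y) : Prop :=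
  ∀ (A B : Type) [CommCStarAlgebra A] [CommCStarAlgebra B]
    (f : X →⋆ₐ[ℂ] A) (g : Y →⋆ₐ[ℂ] B) (p : A →⋆ₐ[ℂ] B),
    Function.Surjective p → g.comp i = p.comp f →
      ∃ h : Y →⋆ₐ[ℂ] A, h.comp i = f ∧ p.comp h = g

/-! By Gelfand duality, `C(·, ℂ)` is fully faithful on compact Hausdorff spaces: every unital
`*`-homomorphism `C(X, ℂ) → C(B, ℂ)` is precomposition with a unique continuous `k : B → X`.
By Tietze, restriction `C(B, ℂ) → C(A, ℂ)` to a closed `A ⊆ B` is surjective, so the lifting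
problem for `A ⊆ B` becomes a doubly projective lifting square; its solution is `C(k)` for some
`k`, and faithfulness turns the two commuting triangles into `k|A = g` and `f ∘ k = h`. -/

namespace ContinuousMap

variable {𝕜 X B : Type*} [RCLike 𝕜] [TopologicalSpace X] [CompactSpace X] [T2Space X]
  [TopologicalSpace B]

open WeakDual.CharacterSpace

theorem compStarAlgHom'_surjective [CompactSpace B] :
    Function.Surjective (compStarAlgHom' 𝕜 𝕜 : C(B, X) → C(X, 𝕜) →⋆ₐ[𝕜] C(B, 𝕜)) := by
  intro ψ
  refine ⟨((homeoEval X 𝕜).symm : C(_, X)).comp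
    ((compContinuousMap ψ).comp (continuousMapEval B 𝕜)), ?_⟩
  ext φ b
  exact DFunLike.congr_fun
    ((homeoEval X 𝕜).apply_symm_apply (compContinuousMap ψ (continuousMapEval B 𝕜 b))) φ

theorem compStarAlgHom'_injective :
    Function.Injective (compStarAlgHom' 𝕜 𝕜 : C(B, X) → C(X, 𝕜) →⋆ₐ[𝕜] C(B, 𝕜)) := by
  intro k₁ k₂ hk
  ext b
  exact (homeoEval X 𝕜).injective <| WeakDual.CharacterSpace.ext fun φ ↦ congr($hk φ b)

theorem compStarAlgHom'_restrict_surjective [NormalSpace B] {A : Set B} (hA : IsClosed A) :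
    Function.Surjective (compStarAlgHom' 𝕜 𝕜 ((ContinuousMap.id B).restrict A)) :=
  fun φ ↦ φ.exists_restrict_eq hA

end ContinuousMap

/-- If `C(f) : C(Y) → C(X)` is doubly projective in the category of commutative unital
C*-algebras, then `f` is soft. -/
theorem isSoft_of_doublyProjectiveComm {X Y : Type}
    [TopologicalSpace X] [CompactSpace X] [T2Space X]
    [TopologicalSpace Y] [CompactSpace Y] [T2Space Y]
    (f : C(X, Y)) (hf : DoublyProjectiveComm (ContinuousMap.compStarAlgHom' ℂ ℂ f)) :
    IsSoft f := by
  intro B _ _ _ A hA g h hgh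
  have : CompactSpace A := isCompact_iff_compactSpace.mp hA.isCompact
  set ι := (ContinuousMap.id B).restrict A
  have hsq : f.comp g = h.comp ι := ContinuousMap.ext hgh
  obtain ⟨ψ, hψf, hψι⟩ := hf C(B, ℂ) C(A, ℂ) (h.compStarAlgHom' ℂ ℂ) (g.compStarAlgHom' ℂ ℂ)
    (ι.compStarAlgHom' ℂ ℂ) (ContinuousMap.compStarAlgHom'_restrict_surjective hA)
    (by rw [← ContinuousMap.compStarAlgHom'_comp, ← ContinuousMap.compStarAlgHom'_comp, hsq])
  obtain ⟨k, rfl⟩ := ContinuousMap.compStarAlgHom'_surjective ψ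
  rw [← ContinuousMap.compStarAlgHom'_comp] at hψf hψι
  exact ⟨k, fun a ↦ congr($(ContinuousMap.compStarAlgHom'_injective hψι) a),
    fun b ↦ congr($(ContinuousMap.compStarAlgHom'_injective hψf) b)⟩
end

section
/- Main theorem: Let f : X → Y be a surjective continuous map of a compact Hausdorff space X onto a Peano continuum Y with more than one point. If C(f) : C(Y) → C(X) is doubly projective in the category of unital C*-algebras, then f is a homeomorphism. -/
/-!
A star projection `P` in a unital C*-algebra `B` is the same as a unital `*`-homomorphism
`ℂ × ℂ → B`, `(a, b) ↦ a • P + b • (1 - P)`; write it `P(a, b)`. If `f x₁ = f x₂ =: y₀` with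
`x₁ ≠ x₂`, take non-commuting projections `P`, `Q` in `M₂(ℂ)` and the square with top arrow
`χ ↦ (y ↦ P(χ y, χ y₀)) : C(Y) → C(Y, M₂)`, bottom arrow `ψ ↦ Q(ψ x₁, ψ x₂) : C(X) → M₂` and
evaluation at `y₀`; it commutes since both corners send `χ` to the scalar `χ y₀`. A diagonal `h`
maps the commutative `C(X)` into the commutant of the top arrow's image, so `(h ψ) y` commutes with
`P` for `y ≠ y₀`, and by continuity also at the non-isolated point `y₀`. But
`(h ψ) y₀ = Q(ψ x₁, ψ x₂) = Q` for `ψ` separating `x₁` from `x₂`.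
-/

/-- Doubly projective unital `*`-homomorphism of unital C*-algebras. -/
def DoublyProjective {X Y : Type} [CStarAlgebra X] [CStarAlgebra Y]
    (i : X →⋆ₐ[ℂ] Y) : Prop :=
  ∀ (A B : Type) [CStarAlgebra A] [CStarAlgebra B]
    (f : X →⋆ₐ[ℂ] A) (g : Y →⋆ₐ[ℂ] B) (p : A →⋆ₐ[ℂ] B),
    Function.Surjective p → g.comp i = p.comp f →
      ∃ h : Y →⋆ₐ[ℂ] A, h.comp i = f ∧ p.comp h = g

open Topology

namespace IsStarProjection

variable {𝕜 A : Type*} [CommSemiring 𝕜] [StarRing 𝕜] [Ring A] [StarRing A] [Algebra 𝕜 A]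
  [StarModule 𝕜 A] {P : A}

def toStarAlgHom (hP : IsStarProjection P) : 𝕜 × 𝕜 →⋆ₐ[𝕜] A where
  toFun z := z.1 • P + z.2 • (1 - P)
  map_one' := by simp
  map_mul' z w := by
    have hPP' : P * (1 - P) = 0 := by rw [mul_sub, mul_one, hP.isIdempotentElem.eq, sub_self]
    have hP'P : (1 - P) * P = 0 := by rw [sub_mul, one_mul, hP.isIdempotentElem.eq, sub_self]
    simp only [Prod.fst_mul, Prod.snd_mul, add_mul, mul_add, smul_mul_smul_comm,
      hP.isIdempotentElem.eq, hP.isIdempotentElem.one_sub.eq, hPP', hP'P, smul_zero, add_zero,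
      zero_add]
  map_zero' := by simp
  map_add' z w := by simp only [Prod.fst_add, Prod.snd_add, add_smul]; abel
  commutes' r := by
    simp only [Algebra.algebraMap_eq_smul_one, Prod.smul_fst, Prod.fst_one, smul_eq_mul, mul_one,
      Prod.smul_snd, Prod.snd_one, ← smul_add, add_sub_cancel]
  map_star' z := by
    simp only [Prod.fst_star, Prod.snd_star, star_add, star_smul, hP.isSelfAdjoint.star_eq,
      star_sub, star_one]

@[simp]
theorem toStarAlgHom_apply (hP : IsStarProjection P) (z : 𝕜 × 𝕜) :
    hP.toStarAlgHom z = z.1 • P + z.2 • (1 - P) :=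
  rfl

theorem continuous_toStarAlgHom [TopologicalSpace 𝕜] [TopologicalSpace A] [ContinuousAdd A]
    [ContinuousSMul 𝕜 A] (hP : IsStarProjection P) : Continuous (hP.toStarAlgHom (𝕜 := 𝕜)) :=
  (continuous_fst.smul continuous_const).add (continuous_snd.smul continuous_const)

end IsStarProjection

namespace ContinuousMap

section StarAlgHom

variable {Y R : Type*} [TopologicalSpace Y] [TopologicalSpace R]

def prodMkConstStarAlgHom [CommSemiring R] [IsTopologicalSemiring R] [Star R] [ContinuousStar R]
    (y₀ : Y) : C(Y, R) →⋆ₐ[R] C(Y, R × R) where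
  toFun χ := χ.prodMk (.const Y (χ y₀))
  map_one' := rfl
  map_mul' _ _ := rfl
  map_zero' := rfl
  map_add' _ _ := rfl
  commutes' _ := rfl
  map_star' _ := rfl

@[simp]
theorem prodMkConstStarAlgHom_apply [CommSemiring R] [IsTopologicalSemiring R] [Star R]
    [ContinuousStar R] (y₀ : Y) (χ : C(Y, R)) (y : Y) :
    prodMkConstStarAlgHom y₀ χ y = (χ y, χ y₀) :=
  rfl

variable (S : Type*) [CommSemiring S] [Semiring R] [IsTopologicalSemiring R] [Algebra S R] [Star R]
  [ContinuousStar R]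

def evalStarAlgHom' (y : Y) : C(Y, R) →⋆ₐ[S] R where
  toFun F := F y
  map_one' := rfl
  map_mul' _ _ := rfl
  map_zero' := rfl
  map_add' _ _ := rfl
  commutes' _ := rfl
  map_star' _ := rfl

@[simp]
theorem evalStarAlgHom'_apply (y : Y) (F : C(Y, R)) : evalStarAlgHom' S y F = F y :=
  rfl

end StarAlgHom

theorem exists_apply_eq_one_apply_eq_zero {Z : Type*} [TopologicalSpace Z] [NormalSpace Z]
    [T1Space Z] {z w : Z} (h : z ≠ w) : ∃ χ : C(Z, ℂ), χ z = 1 ∧ χ w = 0 := by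
  obtain ⟨g, hgw, hgz, -⟩ := exists_continuous_zero_one_of_isClosed isClosed_singleton
    isClosed_singleton (Set.disjoint_singleton.2 h.symm)
  exact ⟨(ContinuousMap.mk Complex.ofReal Complex.continuous_ofReal).comp g,
    by simp [hgz rfl], by simp [hgw rfl]⟩

theorem commute_apply_of_forall_ne {Y B : Type*} [TopologicalSpace Y] [TopologicalSpace B]
    [T2Space B] [Mul B] [ContinuousMul B] (F : C(Y, B)) (b : B) (y₀ : Y) [(𝓝[≠] y₀).NeBot]
    (h : ∀ y ≠ y₀, Commute (F y) b) : Commute (F y₀) b :=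
  congrFun ((F.continuous.mul continuous_const).ext_on (dense_compl_singleton y₀)
    (continuous_const.mul F.continuous) h) y₀

end ContinuousMap

theorem injective_of_doublyProjective {X Y B : Type} [TopologicalSpace X] [CompactSpace X]
    [T2Space X] [TopologicalSpace Y] [CompactSpace Y] [T2Space Y] [ConnectedSpace Y]
    [Nontrivial Y] [CStarAlgebra B] {P Q : B} (hP : IsStarProjection P)
    (hQ : IsStarProjection Q) (hPQ : ¬ Commute P Q) (f : C(X, Y))
    (hdp : DoublyProjective (ContinuousMap.compStarAlgHom' ℂ ℂ f)) : Function.Injective f := by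
  intro x₁ x₂ hx
  by_contra hne
  set y₀ := f x₁ with hy₀
  let φ : C(Y, ℂ) →⋆ₐ[ℂ] C(Y, B) :=
    (ContinuousMap.compStarAlgHom Y hP.toStarAlgHom hP.continuous_toStarAlgHom).comp
      (ContinuousMap.prodMkConstStarAlgHom y₀)
  let γ : C(X, ℂ) →⋆ₐ[ℂ] B := hQ.toStarAlgHom.comp
    ((ContinuousMap.evalStarAlgHom ℂ ℂ x₁).prod (ContinuousMap.evalStarAlgHom ℂ ℂ x₂))
  have hsquare : γ.comp (ContinuousMap.compStarAlgHom' ℂ ℂ f) =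
      (ContinuousMap.evalStarAlgHom' ℂ y₀).comp φ := by
    ext χ
    simp [γ, φ, ← hy₀, ← hx, ← smul_add]
  obtain ⟨h, hhf, hph⟩ := hdp C(Y, B) B φ γ (ContinuousMap.evalStarAlgHom' ℂ y₀)
    (fun b => ⟨.const Y b, rfl⟩) hsquare
  obtain ⟨ψ, hψ₁, hψ₂⟩ := ContinuousMap.exists_apply_eq_one_apply_eq_zero hne
  have hcomm : ∀ y ≠ y₀, Commute (h ψ y) P := by
    intro y hy
    obtain ⟨χ, hχy, hχy₀⟩ := ContinuousMap.exists_apply_eq_one_apply_eq_zero hy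
    have hfχ : φ χ y = P := by simp [φ, hχy, hχy₀]
    have hψχ : Commute (h ψ) (φ χ) := by
      rw [← hhf]
      exact (Commute.all _ _).map h
    simpa [hfχ] using hψχ.map (ContinuousMap.evalStarAlgHom' ℂ y)
  have hψQ : h ψ y₀ = Q := by
    rw [show h ψ y₀ = γ ψ from DFunLike.congr_fun hph ψ]
    simp [γ, hψ₁, hψ₂]
  exact hPQ (hψQ ▸ (ContinuousMap.commute_apply_of_forall_ne (h ψ) P y₀ hcomm)).symm

theorem Matrix.exists_isStarProjection_not_commute :
    ∃ P Q : Matrix (Fin 2) (Fin 2) ℂ, IsStarProjection P ∧ IsStarProjection Q ∧ ¬ Commute P Q := by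
  refine ⟨!![1, 0; 0, 0], !![2⁻¹, 2⁻¹; 2⁻¹, 2⁻¹], ?_, ?_, fun h => ?_⟩
  · rw [isStarProjection_iff']
    constructor <;> ext i j <;> fin_cases i <;> fin_cases j <;> simp
  · rw [isStarProjection_iff']
    constructor <;> ext i j <;> fin_cases i <;> fin_cases j <;> norm_num [Matrix.mul_apply]
  · simpa [Matrix.mul_apply] using congrFun (congrFun h.eq 0) 1

theorem main_theorem_general {X Y : Type}
    [TopologicalSpace X] [CompactSpace X] [T2Space X]
    [TopologicalSpace Y] [CompactSpace Y] [T2Space Y]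
    [ConnectedSpace Y]
    [Nontrivial Y]
    (f : C(X, Y)) (hsurj : Function.Surjective f)
    (hdp : DoublyProjective (ContinuousMap.compStarAlgHom' ℂ ℂ f)) :
    IsHomeomorph f := by
  obtain ⟨P, Q, hP, hQ, hPQ⟩ := Matrix.exists_isStarProjection_not_commute
  open scoped Matrix.Norms.L2Operator in
  exact isHomeomorph_iff_continuous_bijective.2
    ⟨f.continuous, injective_of_doublyProjective hP hQ hPQ f hdp, hsurj⟩

/-- Main theorem: a surjective map of a compact Hausdorff space onto a nondegenerate Peano
continuum whose induced homomorphism `C(f) : C(Y) → C(X)` is doubly projective in the category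
of unital C*-algebras is a homeomorphism. -/
theorem main_theorem {X Y : Type}
    [TopologicalSpace X] [CompactSpace X] [T2Space X]
    [TopologicalSpace Y] [CompactSpace Y] [T2Space Y]
    [TopologicalSpace.MetrizableSpace Y] [ConnectedSpace Y] [LocallyConnectedSpace Y]
    [Nontrivial Y]
    (f : C(X, Y)) (hsurj : Function.Surjective f)
    (hdp : DoublyProjective (ContinuousMap.compStarAlgHom' ℂ ℂ f)) :
    IsHomeomorph f :=
  main_theorem_general f hsurj hdp
end
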